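/- Let F be a monotone subadditive quality cost with integer exponent α ≥ 1, let the predicted instance Ĵ be nonempty with 0 < OPT(Ĵ) < ∞, let 𝒥 be the true instance, and assume OfflineAlg is γ_off-competitive and OnlineAlg is γ_on-competitive. Then for all λ ∈ (0,1], the schedule S output by TPE run with confidence parameter λ satisfies cost(S, 𝒥) ≤ OPT(Ĵ)·( γ_off^{1/α} + γ_on^{1/α}·((λ·γ_off)^{1/α} + η₁^{1/α}) )^α. -/

import Mathlib

/-! STATEMENT 4 (Lemma 3.2): upper bound on the cost of the schedule output by TPE in terms of OPT(Ĵ) and the error η₁. -/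

open MeasureTheory Finset
open scoped ENNReal BigOperators Classical

/-- A job: identifier, release time, processing time, weight. -/
structure Job where
  id : ℕ
  r : ℝ
  p : ℝ
  v : ℝ

noncomputable instance : DecidableEq Job := Classical.decEq _

/-- An instance is valid when release times are nonnegative and processing
times and weights are positive. -/
def ValidInstance (J : Finset Job) : Prop :=
  ∀ j ∈ J, 0 ≤ j.r ∧ 0 < j.p ∧ 0 < j.v

/-- A schedule: speed functions for jobs. -/
abbrev Sched := Job → ℝ → ℝ

/-- `S` is a feasible schedule for the instance `J`. -/
def Feasible (J : Finset Job) (S : Sched) : Prop :=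
  ∀ j ∈ J, Measurable (S j) ∧ (∀ t, 0 ≤ S j t) ∧ (∀ t, t < j.r → S j t = 0) ∧
    (∫ t in Set.Ici j.r, S j t) = j.p

/-- Work profile of job `j` under schedule `S`: remaining work at time `t`. -/
noncomputable def work (S : Sched) (j : Job) (t : ℝ) : ℝ :=
  j.p - ∫ u in Set.Icc j.r t, S j u

/-- Energy consumption of schedule `S` on instance `J`, with exponent `α`. -/
noncomputable def energy (α : ℕ) (J : Finset Job) (S : Sched) : ℝ≥0∞ :=
  ∫⁻ t in Set.Ioi (0 : ℝ), ENNReal.ofReal ((∑ j ∈ J, S j t) ^ α)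

/-- A quality cost function: depends only on the work profiles (and job
parameters), is subadditive, monotone in the work profiles, and monotone
under job-set inclusion. -/
structure QualityCost where
  F : Sched → Finset Job → ℝ≥0∞
  profile_congr : ∀ S S' J, (∀ j ∈ J, ∀ t, work S j t = work S' j t) → F S J = F S' J
  subadd : ∀ S J₁ J₂, Disjoint J₁ J₂ → F S (J₁ ∪ J₂) ≤ F S J₁ + F S J₂
  mono_work : ∀ S S' J, (∀ j ∈ J, ∀ t, j.r ≤ t → work S j t ≤ work S' j t) → F S J ≤ F S' J
  mono_subset : ∀ S J' J, J' ⊆ J → F S J' ≤ F S J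

/-- Total cost of a schedule: energy plus quality cost. -/
noncomputable def cost (Q : QualityCost) (α : ℕ) (S : Sched) (J : Finset Job) : ℝ≥0∞ :=
  energy α J S + Q.F S J

/-- Optimal (offline) cost of an instance. -/
noncomputable def OPT (Q : QualityCost) (α : ℕ) (J : Finset Job) : ℝ≥0∞ :=
  ⨅ (S : Sched) (_ : Feasible J S), cost Q α S J

/-- Jobs of `J` released at or before time `t`. -/
noncomputable def restrictLE (J : Finset Job) (t : ℝ) : Finset Job :=
  J.filter fun j => j.r ≤ t

/-- Jobs of `J` released at or after time `t`. -/
noncomputable def restrictGE (J : Finset Job) (t : ℝ) : Finset Job :=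
  J.filter fun j => t ≤ j.r

/-- `A` is a `γ`-competitive offline algorithm: on every instance it returns a
feasible schedule whose cost is between the optimum and `γ` times the optimum. -/
def OfflineCompetitive (Q : QualityCost) (α : ℕ) (γ : ℝ≥0∞) (A : Finset Job → Sched) : Prop :=
  ∀ K : Finset Job, ValidInstance K →
    Feasible K (A K) ∧ OPT Q α K ≤ cost Q α (A K) K ∧ cost Q α (A K) K ≤ γ * OPT Q α K

/-- `A` is a `γ`-competitive online algorithm: on every instance it returns a
feasible schedule of cost at most `γ` times the optimum. -/
def OnlineCompetitive (Q : QualityCost) (α : ℕ) (γ : ℝ≥0∞) (A : Finset Job → Sched) : Prop :=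
  ∀ K : Finset Job, ValidInstance K →
    Feasible K (A K) ∧ cost Q α (A K) K ≤ γ * OPT Q α K

/-- Cost `OFF(K)` achieved by the offline algorithm `Off` on instance `K`. -/
noncomputable def OFFcost (Q : QualityCost) (α : ℕ) (Off : Finset Job → Sched)
    (K : Finset Job) : ℝ≥0∞ :=
  cost Q α (Off K) K

/-- `S` is the schedule output by the algorithm TPE with offline algorithm `Off`,
online algorithm `On`, prediction `Jhat`, true instance `J` and confidence `lam`:
either `OFF(𝒥_{≤t}) ≤ λ·OFF(Ĵ)` for all times `t ≥ 0` and TPE outputs `On(𝒥)`,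
or TPE switches at the first time `t_λ` with `OFF(𝒥_{≤t_λ}) > λ·OFF(Ĵ)` and
outputs the combination of `OfflineAlg(Ĵ_{≥t_λ})` (for the correctly predicted
jobs `𝒥 ∩ Ĵ_{≥t_λ}`) and `OnlineAlg(𝒥 \ Ĵ_{≥t_λ})` (for all other jobs). -/
def TPEOutput (Q : QualityCost) (α : ℕ) (Off On : Finset Job → Sched)
    (Jhat J : Finset Job) (lam : ℝ) (S : Sched) : Prop :=
  ((∀ t : ℝ, 0 ≤ t →
      OFFcost Q α Off (restrictLE J t) ≤ ENNReal.ofReal lam * OFFcost Q α Off Jhat) ∧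
    S = On J) ∨
  (∃ tl : ℝ, 0 ≤ tl ∧
    ENNReal.ofReal lam * OFFcost Q α Off Jhat < OFFcost Q α Off (restrictLE J tl) ∧
    (∀ t : ℝ, 0 ≤ t →
      ENNReal.ofReal lam * OFFcost Q α Off Jhat < OFFcost Q α Off (restrictLE J t) → tl ≤ t) ∧
    S = fun j t =>
      if j ∈ J ∩ restrictGE Jhat tl then Off (restrictGE Jhat tl) j t
      else On (J \ restrictGE Jhat tl) j t)


/-! For schedules run side by side on disjoint job sets, `cost ^ (1/α)` is subadditive: the energy
by Minkowski's inequality in `L^α`, the quality cost by subadditivity, and the two combine by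
Minkowski's inequality in `ℓ^α` on two points. Taking infima, `OPT ^ (1/α)` is subadditive too.

If TPE never switches, `OnlineAlg` costs at most `γ_on·OPT(𝒥) ≤ γ_on·λ·OFF(Ĵ)`. If it switches at
`t_λ`, the offline part costs at most `γ_off·OPT(Ĵ)`, and every job left to the online part is
either released before `t_λ`, where `OPT ≤ OFF ≤ λ·OFF(Ĵ)` by minimality of `t_λ`, or lies in
`𝒥 \ Ĵ`; subadditivity of `OPT ^ (1/α)` then gives the bound. -/

namespace ENNReal

theorem rpow_inv_add_le_of_le {p : ℝ} (hp : 1 ≤ p) {e f e₁ e₂ f₁ f₂ : ℝ≥0∞}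
    (he : e ^ p⁻¹ ≤ e₁ ^ p⁻¹ + e₂ ^ p⁻¹) (hf : f ≤ f₁ + f₂) :
    (e + f) ^ p⁻¹ ≤ (e₁ + f₁) ^ p⁻¹ + (e₂ + f₂) ^ p⁻¹ := by
  have hp0 : p ≠ 0 := by positivity
  have hpnn : 0 ≤ p := by positivity
  have hinv : ∀ x : ℝ≥0∞, (x ^ p⁻¹) ^ p = x := fun x => rpow_inv_rpow hp0 x
  -- Minkowski in `ℓ^p(Fin 2)` for the vectors `(e₁^{1/p}, f₁^{1/p})` and `(e₂^{1/p}, f₂^{1/p})`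
  have hmink := Lp_add_le univ ![e₁ ^ p⁻¹, f₁ ^ p⁻¹] ![e₂ ^ p⁻¹, f₂ ^ p⁻¹] hp
  simp only [Fin.sum_univ_two, Matrix.cons_val_zero, Matrix.cons_val_one, hinv, one_div] at hmink
  refine le_trans (rpow_le_rpow ?_ (by positivity)) hmink
  gcongr
  · simpa only [hinv] using rpow_le_rpow he hpnn
  · calc f ≤ (f₁ ^ p⁻¹) ^ p + (f₂ ^ p⁻¹) ^ p := by simpa only [hinv] using hf
      _ ≤ (f₁ ^ p⁻¹ + f₂ ^ p⁻¹) ^ p := add_rpow_le_rpow_add _ _ hp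

theorem le_mul_rpow_of_rpow_inv_le {p : ℝ} (hp : 0 < p) {a x m : ℝ≥0∞}
    (h : a ^ p⁻¹ ≤ x ^ p⁻¹ * m) : a ≤ x * m ^ p := by
  calc a = (a ^ p⁻¹) ^ p := (rpow_inv_rpow hp.ne' a).symm
    _ ≤ (x ^ p⁻¹ * m) ^ p := rpow_le_rpow h hp.le
    _ = x * m ^ p := by rw [mul_rpow_of_nonneg _ _ hp.le, rpow_inv_rpow hp.ne']

end ENNReal

theorem Feasible.mono {J' J : Finset Job} {S : Sched} (hS : Feasible J S) (h : J' ⊆ J) :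
    Feasible J' S :=
  fun j hj => hS j (h hj)

theorem Feasible.piecewise {A B : Finset Job} {S₁ S₂ : Sched} (h₁ : Feasible A S₁)
    (h₂ : Feasible B S₂) : Feasible (A ∪ B) (A.piecewise S₁ S₂) := by
  intro j hj
  by_cases hjA : j ∈ A
  · rw [piecewise_eq_of_mem _ _ _ hjA]; exact h₁ j hjA
  · rw [piecewise_eq_of_notMem _ _ _ hjA]; exact h₂ j ((mem_union.1 hj).resolve_left hjA)

theorem ValidInstance.mono {J' J : Finset Job} (hJ : ValidInstance J) (h : J' ⊆ J) :
    ValidInstance J' :=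
  fun j hj => hJ j (h hj)

theorem exists_restrictLE_eq_self (J : Finset Job) : ∃ t, 0 ≤ t ∧ restrictLE J t = J := by
  obtain ⟨M, hM⟩ := (J.image Job.r).bddAbove
  refine ⟨max 0 M, le_max_left _ _, filter_true_of_mem fun j hj => ?_⟩
  exact (hM (mem_image_of_mem _ hj)).trans (le_max_right _ _)

section Energy

variable (α : ℕ)

theorem energy_congr {J : Finset Job} {S S' : Sched} (h : ∀ j ∈ J, S j = S' j) :
    energy α J S = energy α J S' := by
  unfold energy
  congr! 4 with t
  exact sum_congr rfl fun j hj => by rw [h j hj]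

theorem energy_mono {J' J : Finset Job} {S : Sched} (h : J' ⊆ J)
    (hS : ∀ j ∈ J, ∀ t, 0 ≤ S j t) : energy α J' S ≤ energy α J S := by
  refine lintegral_mono fun t => ENNReal.ofReal_le_ofReal ?_
  refine pow_le_pow_left₀ (sum_nonneg fun j hj => hS j (h hj) t) ?_ α
  exact sum_le_sum_of_subset_of_nonneg h fun j hj _ => hS j hj t

theorem energy_eq_lintegral_rpow {J : Finset Job} {S : Sched} (hS : ∀ j ∈ J, ∀ t, 0 ≤ S j t) :
    energy α J S = ∫⁻ t in Set.Ioi 0, (∑ j ∈ J, ENNReal.ofReal (S j t)) ^ (α : ℝ) := by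
  refine lintegral_congr fun t => ?_
  rw [← ENNReal.ofReal_sum_of_nonneg fun j hj => hS j hj t, ENNReal.rpow_natCast,
    ← ENNReal.ofReal_pow (sum_nonneg fun j hj => hS j hj t)]

variable {α}

theorem energy_union_rpow_inv_le (hα : 1 ≤ α) {A B : Finset Job} (hAB : Disjoint A B)
    {S : Sched} (hm : ∀ j ∈ A ∪ B, Measurable (S j)) (hS : ∀ j ∈ A ∪ B, ∀ t, 0 ≤ S j t) :
    energy α (A ∪ B) S ^ (α : ℝ)⁻¹ ≤ energy α A S ^ (α : ℝ)⁻¹ + energy α B S ^ (α : ℝ)⁻¹ := by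
  have speed : ∀ C ⊆ A ∪ B, Measurable fun t => ∑ j ∈ C, ENNReal.ofReal (S j t) :=
    fun C hC => Finset.measurable_sum _ fun j hj => (hm j (hC hj)).ennreal_ofReal
  have hmink := ENNReal.lintegral_Lp_add_le (μ := volume.restrict (Set.Ioi 0))
    (speed A subset_union_left).aemeasurable (speed B subset_union_right).aemeasurable
    (Nat.one_le_cast.2 hα)
  simp only [one_div, Pi.add_apply, ← sum_union hAB] at hmink
  rwa [energy_eq_lintegral_rpow α hS,
    energy_eq_lintegral_rpow α fun j hj => hS j (mem_union_left _ hj),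
    energy_eq_lintegral_rpow α fun j hj => hS j (mem_union_right _ hj)]

end Energy

section Cost

variable (Q : QualityCost) {α : ℕ}

theorem cost_congr {J : Finset Job} {S S' : Sched} (h : ∀ j ∈ J, S j = S' j) :
    cost Q α S J = cost Q α S' J := by
  unfold cost
  rw [energy_congr α h, Q.profile_congr S S' J fun j hj t => by unfold work; rw [h j hj]]

theorem cost_mono {J' J : Finset Job} {S : Sched} (h : J' ⊆ J)
    (hS : ∀ j ∈ J, ∀ t, 0 ≤ S j t) : cost Q α S J' ≤ cost Q α S J :=
  add_le_add (energy_mono α h hS) (Q.mono_subset S J' J h)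

theorem cost_union_rpow_inv_le (hα : 1 ≤ α) {A B : Finset Job} (hAB : Disjoint A B)
    {S : Sched} (hS : Feasible (A ∪ B) S) :
    cost Q α S (A ∪ B) ^ (α : ℝ)⁻¹ ≤ cost Q α S A ^ (α : ℝ)⁻¹ + cost Q α S B ^ (α : ℝ)⁻¹ :=
  ENNReal.rpow_inv_add_le_of_le (Nat.one_le_cast.2 hα)
    (energy_union_rpow_inv_le hα hAB (fun j hj => (hS j hj).1) fun j hj => (hS j hj).2.1)
    (Q.subadd S A B hAB)

theorem cost_piecewise_rpow_inv_le (hα : 1 ≤ α) {A B : Finset Job} (hAB : Disjoint A B)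
    {S₁ S₂ : Sched} (h₁ : Feasible A S₁) (h₂ : Feasible B S₂) :
    cost Q α (A.piecewise S₁ S₂) (A ∪ B) ^ (α : ℝ)⁻¹ ≤
      cost Q α S₁ A ^ (α : ℝ)⁻¹ + cost Q α S₂ B ^ (α : ℝ)⁻¹ := by
  have hA : cost Q α (A.piecewise S₁ S₂) A = cost Q α S₁ A :=
    cost_congr Q fun j hj => piecewise_eq_of_mem _ _ _ hj
  have hB : cost Q α (A.piecewise S₁ S₂) B = cost Q α S₂ B :=
    cost_congr Q fun j hj => piecewise_eq_of_notMem _ _ _ (disjoint_right.1 hAB hj)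
  rw [← hA, ← hB]
  exact cost_union_rpow_inv_le Q hα hAB (h₁.piecewise h₂)

theorem OPT_le_cost {J : Finset Job} {S : Sched} (hS : Feasible J S) :
    OPT Q α J ≤ cost Q α S J :=
  iInf₂_le S hS

theorem OPT_mono {J' J : Finset Job} (h : J' ⊆ J) : OPT Q α J' ≤ OPT Q α J :=
  le_iInf₂ fun _ hS =>
    (OPT_le_cost Q (hS.mono h)).trans (cost_mono Q h fun j hj => (hS j hj).2.1)

theorem OPT_rpow_eq_iInf {p : ℝ} (hp : 0 < p) (J : Finset Job) :
    OPT Q α J ^ p = ⨅ S : {S // Feasible J S}, cost Q α S.1 J ^ p := by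
  rw [OPT, iInf_subtype']
  exact (ENNReal.orderIsoRpow p hp).map_iInf _

theorem OPT_union_rpow_inv_le (hα : 1 ≤ α) (C D : Finset Job) :
    OPT Q α (C ∪ D) ^ (α : ℝ)⁻¹ ≤ OPT Q α C ^ (α : ℝ)⁻¹ + OPT Q α D ^ (α : ℝ)⁻¹ := by
  have hr : (0 : ℝ) < (α : ℝ)⁻¹ := by positivity
  rw [OPT_rpow_eq_iInf Q hr C, OPT_rpow_eq_iInf Q hr D]
  refine ENNReal.le_iInf_add_iInf fun ⟨SC, hSC⟩ ⟨SD, hSD⟩ => ?_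
  have hSD' := hSD.mono (sdiff_subset (s := D) (t := C))
  calc OPT Q α (C ∪ D) ^ (α : ℝ)⁻¹
      ≤ cost Q α (C.piecewise SC SD) (C ∪ D \ C) ^ (α : ℝ)⁻¹ := by
        rw [union_sdiff_self_eq_union]
        gcongr
        exact OPT_le_cost Q (by simpa using hSC.piecewise hSD')
    _ ≤ cost Q α SC C ^ (α : ℝ)⁻¹ + cost Q α SD (D \ C) ^ (α : ℝ)⁻¹ :=
        cost_piecewise_rpow_inv_le Q hα disjoint_sdiff hSC hSD'
    _ ≤ cost Q α SC C ^ (α : ℝ)⁻¹ + cost Q α SD D ^ (α : ℝ)⁻¹ := by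
        gcongr
        exact cost_mono Q sdiff_subset fun j hj => (hSD j hj).2.1

theorem cost_ite_rpow_inv_le (hα : 1 ≤ α) {A J : Finset Job} {S₁ S₂ : Sched}
    (h₁ : Feasible A S₁) (h₂ : Feasible (J \ A) S₂) :
    cost Q α (fun j t => if j ∈ J ∩ A then S₁ j t else S₂ j t) J ^ (α : ℝ)⁻¹ ≤
      cost Q α S₁ A ^ (α : ℝ)⁻¹ + cost Q α S₂ (J \ A) ^ (α : ℝ)⁻¹ := by
  have hS : (fun j t => if j ∈ J ∩ A then S₁ j t else S₂ j t) = (J ∩ A).piecewise S₁ S₂ := by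
    funext j t
    rw [Finset.piecewise]
    split_ifs <;> rfl
  have hJ : J = J ∩ A ∪ J \ A := by rw [union_comm, sdiff_union_inter]
  have h₁' := h₁.mono (inter_subset_right (s₁ := J))
  rw [hS]
  calc cost Q α ((J ∩ A).piecewise S₁ S₂) J ^ (α : ℝ)⁻¹
      ≤ cost Q α S₁ (J ∩ A) ^ (α : ℝ)⁻¹ + cost Q α S₂ (J \ A) ^ (α : ℝ)⁻¹ := by
        have h := cost_piecewise_rpow_inv_le Q hα (disjoint_sdiff_inter J A).symm h₁' h₂
        rwa [← hJ] at h
    _ ≤ cost Q α S₁ A ^ (α : ℝ)⁻¹ + cost Q α S₂ (J \ A) ^ (α : ℝ)⁻¹ := by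
        gcongr
        exact cost_mono Q inter_subset_right fun j hj => (h₁ j hj).2.1

variable {Q} {Off On : Finset Job → Sched} {γoff γon : ℝ≥0∞} {Jhat J : Finset Job}

theorem cost_le_of_forall_OFFcost_restrictLE_le (hOff : OfflineCompetitive Q α γoff Off)
    (hOn : OnlineCompetitive Q α γon On) (hJ : ValidInstance J) {x : ℝ≥0∞}
    (hx : ∀ t, 0 ≤ t → OFFcost Q α Off (restrictLE J t) ≤ x) : cost Q α (On J) J ≤ γon * x := by
  obtain ⟨t, ht, hJt⟩ := exists_restrictLE_eq_self J
  calc cost Q α (On J) J ≤ γon * OPT Q α J := (hOn J hJ).2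
    _ ≤ γon * x := by
        gcongr
        exact (hOff J hJ).2.1.trans (hJt ▸ hx t ht)

theorem OPT_sdiff_restrictGE_rpow_inv_le (hα : 1 ≤ α) (hOff : OfflineCompetitive Q α γoff Off)
    (hJ : ValidInstance J) {x : ℝ≥0∞} {tl : ℝ}
    (hmin : ∀ t, 0 ≤ t → x < OFFcost Q α Off (restrictLE J t) → tl ≤ t) :
    OPT Q α (J \ restrictGE Jhat tl) ^ (α : ℝ)⁻¹ ≤
      x ^ (α : ℝ)⁻¹ + OPT Q α (J \ Jhat) ^ (α : ℝ)⁻¹ := by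
  set C := J.filter (·.r < tl)
  have hsub : J \ restrictGE Jhat tl ⊆ C ∪ J \ Jhat := by
    intro j
    simp only [restrictGE, C, mem_sdiff, mem_union, mem_filter]
    intro h
    by_cases hj : j.r < tl <;> simp_all
  rcases C.eq_empty_or_nonempty with hC | hC
  · rw [hC, empty_union] at hsub
    exact (ENNReal.rpow_le_rpow (OPT_mono Q hsub) (by positivity)).trans le_add_self
  -- every job released before the switching time is released by `t'`, where no switch occurred
  set t' := C.sup' hC Job.r
  have hCt : C ⊆ restrictLE J t' := fun j hj =>
    mem_filter.2 ⟨(mem_filter.1 hj).1, le_sup' Job.r hj⟩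
  have ht'0 : 0 ≤ t' := by
    obtain ⟨j, hj⟩ := hC
    exact (hJ j (mem_filter.1 hj).1).1.trans (le_sup' Job.r hj)
  have ht'tl : t' < tl := (sup'_lt_iff hC).2 fun j hj => (mem_filter.1 hj).2
  have hOPTC : OPT Q α C ≤ x :=
    calc OPT Q α C ≤ OPT Q α (restrictLE J t') := OPT_mono Q hCt
      _ ≤ OFFcost Q α Off (restrictLE J t') := (hOff _ (hJ.mono (filter_subset _ _))).2.1
      _ ≤ x := not_lt.1 fun h => (hmin t' ht'0 h).not_gt ht'tl
  calc OPT Q α (J \ restrictGE Jhat tl) ^ (α : ℝ)⁻¹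
      ≤ OPT Q α (C ∪ J \ Jhat) ^ (α : ℝ)⁻¹ := by gcongr; exact OPT_mono Q hsub
    _ ≤ OPT Q α C ^ (α : ℝ)⁻¹ + OPT Q α (J \ Jhat) ^ (α : ℝ)⁻¹ := OPT_union_rpow_inv_le Q hα _ _
    _ ≤ x ^ (α : ℝ)⁻¹ + OPT Q α (J \ Jhat) ^ (α : ℝ)⁻¹ := by gcongr

theorem cost_switch_rpow_inv_le (hα : 1 ≤ α) (hOff : OfflineCompetitive Q α γoff Off)
    (hOn : OnlineCompetitive Q α γon On) (hJhat : ValidInstance Jhat) (hJ : ValidInstance J)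
    (tl : ℝ) :
    cost Q α (fun j t => if j ∈ J ∩ restrictGE Jhat tl then Off (restrictGE Jhat tl) j t
        else On (J \ restrictGE Jhat tl) j t) J ^ (α : ℝ)⁻¹ ≤
      (γoff * OPT Q α Jhat) ^ (α : ℝ)⁻¹ +
        γon ^ (α : ℝ)⁻¹ * OPT Q α (J \ restrictGE Jhat tl) ^ (α : ℝ)⁻¹ := by
  set Ahat := restrictGE Jhat tl
  have hAhat : ValidInstance Ahat := hJhat.mono (filter_subset _ _)
  have hB : ValidInstance (J \ Ahat) := hJ.mono sdiff_subset
  rw [← ENNReal.mul_rpow_of_nonneg _ _ (by positivity)]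
  refine (cost_ite_rpow_inv_le Q hα (hOff Ahat hAhat).1 (hOn _ hB).1).trans ?_
  gcongr
  · exact (hOff Ahat hAhat).2.2.trans (by gcongr; exact OPT_mono Q (filter_subset _ _))
  · exact (hOn _ hB).2

end Cost

theorem tpe_cost_upper_bound_general (Q : QualityCost) (α : ℕ) (hα : 1 ≤ α)
    (γoff γon : ℝ≥0∞) (Off On : Finset Job → Sched)
    (hOff : OfflineCompetitive Q α γoff Off) (hOn : OnlineCompetitive Q α γon On)
    (Jhat J : Finset Job) (hJhatV : ValidInstance Jhat) (hJV : ValidInstance J)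
    (hpos : 0 < OPT Q α Jhat) (hfin : OPT Q α Jhat < ⊤)
    (lam : ℝ)
    (η₁ : ℝ≥0∞) (hη₁ : η₁ = OPT Q α (J \ Jhat) / OPT Q α Jhat)
    (S : Sched) (hS : TPEOutput Q α Off On Jhat J lam S) :
    cost Q α S J ≤
      OPT Q α Jhat *
        (γoff ^ ((α : ℝ)⁻¹) +
          γon ^ ((α : ℝ)⁻¹) *
            ((ENNReal.ofReal lam * γoff) ^ ((α : ℝ)⁻¹) + η₁ ^ ((α : ℝ)⁻¹))) ^ (α : ℝ) := by
  have hr : (0 : ℝ) ≤ (α : ℝ)⁻¹ := by positivity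
  set X := OPT Q α Jhat
  have hOFF : OFFcost Q α Off Jhat ≤ γoff * X := (hOff Jhat hJhatV).2.2
  have hD : OPT Q α (J \ Jhat) = η₁ * X := by rw [hη₁, ENNReal.div_mul_cancel hpos.ne' hfin.ne]
  refine ENNReal.le_mul_rpow_of_rpow_inv_le (by positivity) ?_
  suffices h : cost Q α S J ^ (α : ℝ)⁻¹ ≤ (γoff * X) ^ (α : ℝ)⁻¹ + γon ^ (α : ℝ)⁻¹ *
      ((ENNReal.ofReal lam * OFFcost Q α Off Jhat) ^ (α : ℝ)⁻¹ + OPT Q α (J \ Jhat) ^ (α : ℝ)⁻¹) by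
    calc _ ≤ _ := h
      _ ≤ (γoff * X) ^ (α : ℝ)⁻¹ + γon ^ (α : ℝ)⁻¹ *
          ((ENNReal.ofReal lam * (γoff * X)) ^ (α : ℝ)⁻¹ + (η₁ * X) ^ (α : ℝ)⁻¹) := by
        rw [hD]; gcongr
      _ = _ := by simp only [ENNReal.mul_rpow_of_nonneg _ _ hr]; ring
  rcases hS with ⟨hall, rfl⟩ | ⟨tl, -, -, hmin, rfl⟩
  · calc cost Q α (On J) J ^ (α : ℝ)⁻¹
        ≤ (γon * (ENNReal.ofReal lam * OFFcost Q α Off Jhat)) ^ (α : ℝ)⁻¹ := by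
          gcongr; exact cost_le_of_forall_OFFcost_restrictLE_le hOff hOn hJV hall
      _ ≤ _ := by
          rw [ENNReal.mul_rpow_of_nonneg γon _ hr]
          exact le_add_left (by gcongr; exact le_self_add)
  · refine (cost_switch_rpow_inv_le hα hOff hOn hJhatV hJV tl).trans ?_
    gcongr
    exact OPT_sdiff_restrictGE_rpow_inv_le hα hOff hJV hmin

/-- **Lemma 3.2.** If `OfflineAlg` is `γ_off`-competitive and `OnlineAlg` is
`γ_on`-competitive then, for all `λ ∈ (0,1]`, the schedule `S` output by TPE
run with confidence parameter `λ` satisfies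
`cost(S,𝒥) ≤ OPT(Ĵ)·(γ_off^{1/α} + γ_on^{1/α}((λγ_off)^{1/α} + η₁^{1/α}))^α`. -/
theorem tpe_cost_upper_bound (Q : QualityCost) (α : ℕ) (hα : 1 ≤ α)
    (γoff γon : ℝ≥0∞) (Off On : Finset Job → Sched)
    (hOff : OfflineCompetitive Q α γoff Off) (hOn : OnlineCompetitive Q α γon On)
    (Jhat J : Finset Job) (hJhatV : ValidInstance Jhat) (hJV : ValidInstance J)
    (hne : Jhat.Nonempty) (hpos : 0 < OPT Q α Jhat) (hfin : OPT Q α Jhat < ⊤)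
    (lam : ℝ) (hlam0 : 0 < lam) (hlam1 : lam ≤ 1)
    (η₁ : ℝ≥0∞) (hη₁ : η₁ = OPT Q α (J \ Jhat) / OPT Q α Jhat)
    (S : Sched) (hS : TPEOutput Q α Off On Jhat J lam S) :
    cost Q α S J ≤
      OPT Q α Jhat *
        (γoff ^ ((α : ℝ)⁻¹) +
          γon ^ ((α : ℝ)⁻¹) *
            ((ENNReal.ofReal lam * γoff) ^ ((α : ℝ)⁻¹) + η₁ ^ ((α : ℝ)⁻¹))) ^ (α : ℝ) :=
  tpe_cost_upper_bound_general Q α hα γoff γon Off On hOff hOn Jhat J hJhatV hJV hpos hfin lam η₁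
    hη₁ S hS
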